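/- For all f ∈ C_0^∞(ℝ^n) with n ≥ 3, ((n-1)^2/4) ∫ |x|^{-1} |f(x)|^2 dx ≤ ∫ |x| |∇f(x)|^2 dx. -/

import Mathlib

open MeasureTheory

lemma euclidean_sum_single {n : ℕ} (x : EuclideanSpace ℝ (Fin n)) :
    ∑ j : Fin n, x j • EuclideanSpace.single j (1:ℝ) = x := by
  ext i
  rw [show (∑ j : Fin n, x j • EuclideanSpace.single j (1:ℝ)) i
      = ∑ j : Fin n, (x j • EuclideanSpace.single j (1:ℝ)) i from by rw [WithLp.ofLp_sum]; exact Finset.sum_apply i _ _]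
  simp [EuclideanSpace.single_apply]

lemma clm_cs_bound {n : ℕ} (L : EuclideanSpace ℝ (Fin n) →L[ℝ] ℂ) (v : EuclideanSpace ℝ (Fin n)) :
    ‖L v‖ ≤ ‖v‖ * Real.sqrt (∑ j : Fin n, ‖L (EuclideanSpace.single j (1:ℝ))‖ ^ 2) := by
  have hv : L v = ∑ j : Fin n, v j • L (EuclideanSpace.single j (1:ℝ)) := by
    conv_lhs => rw [← euclidean_sum_single v]
    rw [map_sum]
    simp
  rw [hv]
  calc ‖∑ j : Fin n, v j • L (EuclideanSpace.single j (1:ℝ))‖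
      ≤ ∑ j : Fin n, ‖v j • L (EuclideanSpace.single j (1:ℝ))‖ := norm_sum_le _ _
    _ = ∑ j : Fin n, |v j| * ‖L (EuclideanSpace.single j (1:ℝ))‖ := by
        simp [norm_smul, Real.norm_eq_abs]
    _ ≤ Real.sqrt (∑ j : Fin n, |v j| ^ 2) *
        Real.sqrt (∑ j : Fin n, ‖L (EuclideanSpace.single j (1:ℝ))‖ ^ 2) := by
        have h := Finset.sum_mul_sq_le_sq_mul_sq Finset.univ (fun j => |v j|)
          (fun j => ‖L (EuclideanSpace.single j (1:ℝ))‖)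
        have h2 := Real.sqrt_le_sqrt h
        rwa [Real.sqrt_sq (Finset.sum_nonneg fun j _ => by positivity),
          Real.sqrt_mul (Finset.sum_nonneg fun j _ => by positivity)] at h2
    _ = ‖v‖ * Real.sqrt (∑ j : Fin n, ‖L (EuclideanSpace.single j (1:ℝ))‖ ^ 2) := by
        rw [EuclideanSpace.norm_eq]
        congr 2

lemma euclid_sum_sq {n : ℕ} (x : EuclideanSpace ℝ (Fin n)) :
    ∑ j : Fin n, x j ^ 2 = ‖x‖ ^ 2 := by
  rw [EuclideanSpace.norm_eq, Real.sq_sqrt (Finset.sum_nonneg fun j _ => by positivity)]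
  congr 1
  funext j
  rw [Real.norm_eq_abs, sq_abs]

variable {n : ℕ}

noncomputable def eproj (n : ℕ) (j : Fin n) : EuclideanSpace ℝ (Fin n) →L[ℝ] ℝ :=
  PiLp.proj 2 (fun _ : Fin n => ℝ) j

@[simp] lemma eproj_apply (j : Fin n) (x : EuclideanSpace ℝ (Fin n)) : eproj n j x = x j := rfl

lemma vf_hasFDerivAt {ε : ℝ} (hε : 0 < ε) (j : Fin n) (x : EuclideanSpace ℝ (Fin n)) :
    HasFDerivAt (fun y : EuclideanSpace ℝ (Fin n) => y j * (Real.sqrt (‖y‖ ^ 2 + ε ^ 2))⁻¹)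
      (x j • ((-(1 / (2 * Real.sqrt (‖x‖ ^ 2 + ε ^ 2))) / Real.sqrt (‖x‖ ^ 2 + ε ^ 2) ^ 2) •
          (2 • (innerSL ℝ) x)) +
        (Real.sqrt (‖x‖ ^ 2 + ε ^ 2))⁻¹ • (eproj n j)) x := by
  have hq : 0 < ‖x‖ ^ 2 + ε ^ 2 := by positivity
  have hs0 : 0 < Real.sqrt (‖x‖ ^ 2 + ε ^ 2) := Real.sqrt_pos.2 hq
  have h1 : HasFDerivAt (fun y : EuclideanSpace ℝ (Fin n) => (y j : ℝ)) (eproj n j) x :=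
    (eproj n j).hasFDerivAt
  have h2 : HasFDerivAt (fun y : EuclideanSpace ℝ (Fin n) => ‖y‖ ^ 2 + ε ^ 2)
      (2 • (innerSL ℝ) x) x :=
    ((hasStrictFDerivAt_norm_sq x).hasFDerivAt).add_const _
  have h3 : HasDerivAt (fun t : ℝ => (Real.sqrt t)⁻¹)
      (-(1 / (2 * Real.sqrt (‖x‖ ^ 2 + ε ^ 2))) / Real.sqrt (‖x‖ ^ 2 + ε ^ 2) ^ 2)
      (‖x‖ ^ 2 + ε ^ 2) :=
    (Real.hasDerivAt_sqrt hq.ne').inv hs0.ne'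
  have h4 := h3.comp_hasFDerivAt x h2
  exact h1.mul h4

lemma vf_fderiv_single {ε : ℝ} (hε : 0 < ε) (j : Fin n) (x : EuclideanSpace ℝ (Fin n)) :
    fderiv ℝ (fun y : EuclideanSpace ℝ (Fin n) => y j * (Real.sqrt (‖y‖ ^ 2 + ε ^ 2))⁻¹) x
        (EuclideanSpace.single j (1:ℝ)) =
      (Real.sqrt (‖x‖ ^ 2 + ε ^ 2))⁻¹ - x j ^ 2 * (Real.sqrt (‖x‖ ^ 2 + ε ^ 2) ^ 3)⁻¹ := by
  have hq : 0 < ‖x‖ ^ 2 + ε ^ 2 := by positivity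
  have hs0 : 0 < Real.sqrt (‖x‖ ^ 2 + ε ^ 2) := Real.sqrt_pos.2 hq
  rw [(vf_hasFDerivAt hε j x).fderiv]
  have hxj : (innerSL ℝ) x (EuclideanSpace.single j (1:ℝ)) = x j := by
    simp [EuclideanSpace.inner_single_right]
  simp only [ContinuousLinearMap.add_apply, ContinuousLinearMap.smul_apply,
    ContinuousLinearMap.coe_smul', Pi.smul_apply, eproj_apply,
    EuclideanSpace.single_apply, hxj, if_pos rfl, smul_eq_mul]
  rw [two_smul]
  have hsne := hs0.ne'
  have hsq : Real.sqrt (‖x‖ ^ 2 + ε ^ 2) ^ 2 = ‖x‖ ^ 2 + ε ^ 2 := Real.sq_sqrt hq.le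
  field_simp
  rw [if_pos trivial]
  ring

lemma eps_step {n : ℕ} (f : EuclideanSpace ℝ (Fin n) → ℂ)
    (hf : ContDiff ℝ (⊤ : ℕ∞) f) (hsupp : HasCompactSupport f) {ε : ℝ} (hε : 0 < ε) :
    ((n : ℝ) - 1) * ∫ x : EuclideanSpace ℝ (Fin n),
        ‖x‖ ^ 2 * (Real.sqrt (‖x‖ ^ 2 + ε ^ 2) ^ 3)⁻¹ * ‖f x‖ ^ 2 ≤
      ∫ x : EuclideanSpace ℝ (Fin n),
        2 * ‖f x‖ * Real.sqrt (∑ j : Fin n, ‖fderiv ℝ f x (EuclideanSpace.single j 1)‖ ^ 2) := by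
  have hfd : Differentiable ℝ f := hf.differentiable (by simp)
  have hfc : Continuous f := hf.continuous
  have hq : ∀ x : EuclideanSpace ℝ (Fin n), (0:ℝ) < ‖x‖ ^ 2 + ε ^ 2 := fun x => by positivity
  have hs0 : ∀ x : EuclideanSpace ℝ (Fin n), 0 < Real.sqrt (‖x‖ ^ 2 + ε ^ 2) :=
    fun x => Real.sqrt_pos.2 (hq x)
  have hsle : ∀ x : EuclideanSpace ℝ (Fin n), ‖x‖ ≤ Real.sqrt (‖x‖ ^ 2 + ε ^ 2) := fun x => by
    have h := Real.sqrt_le_sqrt (show ‖x‖ ^ 2 ≤ ‖x‖ ^ 2 + ε ^ 2 by nlinarith [sq_nonneg ε])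
    rwa [Real.sqrt_sq (norm_nonneg x)] at h
  have hconts : Continuous fun x : EuclideanSpace ℝ (Fin n) => Real.sqrt (‖x‖ ^ 2 + ε ^ 2) :=
    ((continuous_norm.pow 2).add continuous_const).sqrt
  have hcontsinv : Continuous fun x : EuclideanSpace ℝ (Fin n) =>
      (Real.sqrt (‖x‖ ^ 2 + ε ^ 2))⁻¹ := hconts.inv₀ fun x => (hs0 x).ne'
  have hconts3inv : Continuous fun x : EuclideanSpace ℝ (Fin n) =>
      (Real.sqrt (‖x‖ ^ 2 + ε ^ 2) ^ 3)⁻¹ :=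
    (hconts.pow 3).inv₀ fun x => pow_ne_zero 3 (hs0 x).ne'
  have hcontV : ∀ j : Fin n, Continuous fun x : EuclideanSpace ℝ (Fin n) =>
      x j * (Real.sqrt (‖x‖ ^ 2 + ε ^ 2))⁻¹ :=
    fun j => ((eproj n j).continuous).mul hcontsinv
  -- the function φ = ‖f‖²
  have hf1 : ContDiff ℝ (1 : ℕ∞) f := hf.of_le (by simp)
  have hφ : ContDiff ℝ (1 : ℕ∞) fun x : EuclideanSpace ℝ (Fin n) => ‖f x‖ ^ 2 :=
    hf1.norm_sq (𝕜 := ℂ)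
  have hφd : Differentiable ℝ fun x : EuclideanSpace ℝ (Fin n) => ‖f x‖ ^ 2 :=
    hφ.differentiable (by simp)
  have hφcont : Continuous fun x : EuclideanSpace ℝ (Fin n) => ‖f x‖ ^ 2 := hφ.continuous
  have hφc : HasCompactSupport fun x : EuclideanSpace ℝ (Fin n) => ‖f x‖ ^ 2 := by
    have := hsupp.comp_left (g := fun z : ℂ => ‖z‖ ^ 2) (by simp)
    simpa [Function.comp_def] using this
  have hDφ_apply : ∀ (x : EuclideanSpace ℝ (Fin n)) (v),
      fderiv ℝ (fun x => ‖f x‖ ^ 2) x v = 2 * (inner ℝ (f x) (fderiv ℝ f x v) : ℝ) := by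
    intro x v
    rw [((hfd x).hasFDerivAt.norm_sq).fderiv]
    simp [two_smul, two_mul]
  have hcontDφ : Continuous (fderiv ℝ fun x : EuclideanSpace ℝ (Fin n) => ‖f x‖ ^ 2) :=
    hφ.continuous_fderiv (by simp)
  have hcontDφv : ∀ v, Continuous fun x : EuclideanSpace ℝ (Fin n) =>
      fderiv ℝ (fun x => ‖f x‖ ^ 2) x v := fun v => hcontDφ.clm_apply continuous_const
  have hDφc : ∀ v : EuclideanSpace ℝ (Fin n),
      HasCompactSupport fun x => fderiv ℝ (fun x => ‖f x‖ ^ 2) x v := by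
    intro v
    have := (HasCompactSupport.fderiv ℝ hφc).comp_left
      (g := fun L : EuclideanSpace ℝ (Fin n) →L[ℝ] ℝ => L v) (by simp)
    simpa [Function.comp_def] using this
  -- integrability of the three products for IBP
  have int1 : ∀ j : Fin n, Integrable (fun x : EuclideanSpace ℝ (Fin n) =>
      (x j * (Real.sqrt (‖x‖ ^ 2 + ε ^ 2))⁻¹) *
        fderiv ℝ (fun x => ‖f x‖ ^ 2) x (EuclideanSpace.single j 1)) volume :=
    fun j => ((hcontV j).mul (hcontDφv _)).integrable_of_hasCompactSupport ((hDφc _).mul_left)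
  have int2 : ∀ j : Fin n, Integrable (fun x : EuclideanSpace ℝ (Fin n) =>
      fderiv ℝ (fun y : EuclideanSpace ℝ (Fin n) => y j * (Real.sqrt (‖y‖ ^ 2 + ε ^ 2))⁻¹) x
          (EuclideanSpace.single j 1) * ‖f x‖ ^ 2) volume := by
    intro j
    have heq : (fun x : EuclideanSpace ℝ (Fin n) =>
        fderiv ℝ (fun y : EuclideanSpace ℝ (Fin n) => y j * (Real.sqrt (‖y‖ ^ 2 + ε ^ 2))⁻¹) x
          (EuclideanSpace.single j 1) * ‖f x‖ ^ 2)
        = fun x => ((Real.sqrt (‖x‖ ^ 2 + ε ^ 2))⁻¹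
            - x j ^ 2 * (Real.sqrt (‖x‖ ^ 2 + ε ^ 2) ^ 3)⁻¹) * ‖f x‖ ^ 2 :=
      funext fun x => by rw [vf_fderiv_single hε]
    rw [heq]
    exact ((hcontsinv.sub ((((eproj n j).continuous).pow 2).mul hconts3inv)).mul
      hφcont).integrable_of_hasCompactSupport hφc.mul_left
  have int3 : ∀ j : Fin n, Integrable (fun x : EuclideanSpace ℝ (Fin n) =>
      (x j * (Real.sqrt (‖x‖ ^ 2 + ε ^ 2))⁻¹) * ‖f x‖ ^ 2) volume :=
    fun j => ((hcontV j).mul hφcont).integrable_of_hasCompactSupport hφc.mul_left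
  -- integration by parts in each direction
  have key : ∀ j : Fin n,
      ∫ x : EuclideanSpace ℝ (Fin n),
        (x j * (Real.sqrt (‖x‖ ^ 2 + ε ^ 2))⁻¹) *
          fderiv ℝ (fun x => ‖f x‖ ^ 2) x (EuclideanSpace.single j 1)
      = - ∫ x : EuclideanSpace ℝ (Fin n),
        fderiv ℝ (fun y : EuclideanSpace ℝ (Fin n) => y j * (Real.sqrt (‖y‖ ^ 2 + ε ^ 2))⁻¹) x
          (EuclideanSpace.single j 1) * ‖f x‖ ^ 2 :=
    fun j => integral_mul_fderiv_eq_neg_fderiv_mul_of_integrable (int2 j) (int1 j) (int3 j)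
      (fun x _ => (vf_hasFDerivAt hε j x).differentiableAt) (fun x _ => hφd x)
  -- pointwise sum computations
  have Pl : ∀ x : EuclideanSpace ℝ (Fin n),
      ∑ j : Fin n, (x j * (Real.sqrt (‖x‖ ^ 2 + ε ^ 2))⁻¹) *
        fderiv ℝ (fun x => ‖f x‖ ^ 2) x (EuclideanSpace.single j 1)
      = (Real.sqrt (‖x‖ ^ 2 + ε ^ 2))⁻¹ * fderiv ℝ (fun x => ‖f x‖ ^ 2) x x := by
    intro x
    have h : ∀ j : Fin n, (x j * (Real.sqrt (‖x‖ ^ 2 + ε ^ 2))⁻¹) *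
        fderiv ℝ (fun x => ‖f x‖ ^ 2) x (EuclideanSpace.single j 1)
        = (Real.sqrt (‖x‖ ^ 2 + ε ^ 2))⁻¹ *
          fderiv ℝ (fun x => ‖f x‖ ^ 2) x (x j • EuclideanSpace.single j 1) := by
      intro j
      rw [ContinuousLinearMap.map_smul, smul_eq_mul]
      ring
    rw [Finset.sum_congr rfl fun j _ => h j, ← Finset.mul_sum, ← map_sum, euclidean_sum_single]
  have Pr : ∀ x : EuclideanSpace ℝ (Fin n),
      ∑ j : Fin n,
        fderiv ℝ (fun y : EuclideanSpace ℝ (Fin n) => y j * (Real.sqrt (‖y‖ ^ 2 + ε ^ 2))⁻¹) x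
          (EuclideanSpace.single j 1) * ‖f x‖ ^ 2
      = ((n : ℝ) * (Real.sqrt (‖x‖ ^ 2 + ε ^ 2))⁻¹
          - ‖x‖ ^ 2 * (Real.sqrt (‖x‖ ^ 2 + ε ^ 2) ^ 3)⁻¹) * ‖f x‖ ^ 2 := by
    intro x
    rw [← Finset.sum_mul]
    congr 1
    rw [Finset.sum_congr rfl fun j _ => vf_fderiv_single hε j x, Finset.sum_sub_distrib,
      Finset.sum_const, Finset.card_univ, Fintype.card_fin, ← Finset.sum_mul, euclid_sum_sq,
      nsmul_eq_mul]
  -- the summed integral identity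
  have sumid : ∫ x : EuclideanSpace ℝ (Fin n),
      (Real.sqrt (‖x‖ ^ 2 + ε ^ 2))⁻¹ * fderiv ℝ (fun x => ‖f x‖ ^ 2) x x
      = - ∫ x : EuclideanSpace ℝ (Fin n),
        ((n : ℝ) * (Real.sqrt (‖x‖ ^ 2 + ε ^ 2))⁻¹
          - ‖x‖ ^ 2 * (Real.sqrt (‖x‖ ^ 2 + ε ^ 2) ^ 3)⁻¹) * ‖f x‖ ^ 2 := by
    calc ∫ x : EuclideanSpace ℝ (Fin n),
          (Real.sqrt (‖x‖ ^ 2 + ε ^ 2))⁻¹ * fderiv ℝ (fun x => ‖f x‖ ^ 2) x x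
        = ∫ x : EuclideanSpace ℝ (Fin n), ∑ j : Fin n,
            (x j * (Real.sqrt (‖x‖ ^ 2 + ε ^ 2))⁻¹) *
              fderiv ℝ (fun x => ‖f x‖ ^ 2) x (EuclideanSpace.single j 1) := by
          exact integral_congr_ae (Filter.Eventually.of_forall fun x => (Pl x).symm)
      _ = ∑ j : Fin n, ∫ x : EuclideanSpace ℝ (Fin n),
            (x j * (Real.sqrt (‖x‖ ^ 2 + ε ^ 2))⁻¹) *
              fderiv ℝ (fun x => ‖f x‖ ^ 2) x (EuclideanSpace.single j 1) :=
          integral_finset_sum _ fun j _ => int1 j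
      _ = ∑ j : Fin n, - ∫ x : EuclideanSpace ℝ (Fin n),
            fderiv ℝ (fun y : EuclideanSpace ℝ (Fin n) =>
              y j * (Real.sqrt (‖y‖ ^ 2 + ε ^ 2))⁻¹) x
              (EuclideanSpace.single j 1) * ‖f x‖ ^ 2 :=
          Finset.sum_congr rfl fun j _ => key j
      _ = - ∑ j : Fin n, ∫ x : EuclideanSpace ℝ (Fin n),
            fderiv ℝ (fun y : EuclideanSpace ℝ (Fin n) =>
              y j * (Real.sqrt (‖y‖ ^ 2 + ε ^ 2))⁻¹) x
              (EuclideanSpace.single j 1) * ‖f x‖ ^ 2 := by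
          rw [Finset.sum_neg_distrib]
      _ = - ∫ x : EuclideanSpace ℝ (Fin n), ∑ j : Fin n,
            fderiv ℝ (fun y : EuclideanSpace ℝ (Fin n) =>
              y j * (Real.sqrt (‖y‖ ^ 2 + ε ^ 2))⁻¹) x
              (EuclideanSpace.single j 1) * ‖f x‖ ^ 2 := by
          rw [← integral_finset_sum _ fun j _ => int2 j]
      _ = _ := by
          rw [integral_congr_ae (Filter.Eventually.of_forall fun x => Pr x)]
  -- integrability of the three main integrands
  have intI1 : Integrable (fun x : EuclideanSpace ℝ (Fin n) =>
      ‖x‖ ^ 2 * (Real.sqrt (‖x‖ ^ 2 + ε ^ 2) ^ 3)⁻¹ * ‖f x‖ ^ 2) volume :=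
    (((continuous_norm.pow 2).mul hconts3inv).mul hφcont).integrable_of_hasCompactSupport
      hφc.mul_left
  have intI2 : Integrable (fun x : EuclideanSpace ℝ (Fin n) =>
      ((n : ℝ) * (Real.sqrt (‖x‖ ^ 2 + ε ^ 2))⁻¹
        - ‖x‖ ^ 2 * (Real.sqrt (‖x‖ ^ 2 + ε ^ 2) ^ 3)⁻¹) * ‖f x‖ ^ 2) volume :=
    (((continuous_const.mul hcontsinv).sub
      ((continuous_norm.pow 2).mul hconts3inv)).mul hφcont).integrable_of_hasCompactSupport
      hφc.mul_left
  have hG2cont : Continuous fun x : EuclideanSpace ℝ (Fin n) =>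
      ∑ j : Fin n, ‖fderiv ℝ f x (EuclideanSpace.single j 1)‖ ^ 2 :=
    continuous_finset_sum _ fun j _ =>
      (((hf.continuous_fderiv (by simp)).clm_apply continuous_const).norm.pow 2)
  have intI3 : Integrable (fun x : EuclideanSpace ℝ (Fin n) =>
      2 * ‖f x‖ * Real.sqrt (∑ j : Fin n, ‖fderiv ℝ f x (EuclideanSpace.single j 1)‖ ^ 2))
      volume := by
    apply ((continuous_const.mul hfc.norm).mul hG2cont.sqrt).integrable_of_hasCompactSupport
    have h1 : HasCompactSupport fun x : EuclideanSpace ℝ (Fin n) => 2 * ‖f x‖ :=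
      hsupp.norm.mul_left
    exact h1.mul_right
  have intu : Integrable (fun x : EuclideanSpace ℝ (Fin n) =>
      (Real.sqrt (‖x‖ ^ 2 + ε ^ 2))⁻¹ * fderiv ℝ (fun x => ‖f x‖ ^ 2) x x) volume := by
    rw [show (fun x : EuclideanSpace ℝ (Fin n) =>
        (Real.sqrt (‖x‖ ^ 2 + ε ^ 2))⁻¹ * fderiv ℝ (fun x => ‖f x‖ ^ 2) x x)
        = fun x => ∑ j : Fin n, (x j * (Real.sqrt (‖x‖ ^ 2 + ε ^ 2))⁻¹) *
            fderiv ℝ (fun x => ‖f x‖ ^ 2) x (EuclideanSpace.single j 1)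
      from funext fun x => (Pl x).symm]
    exact integrable_finset_sum _ fun j _ => int1 j
  -- pointwise inequalities
  have pw1 : ∀ x : EuclideanSpace ℝ (Fin n),
      ((n : ℝ) - 1) * (‖x‖ ^ 2 * (Real.sqrt (‖x‖ ^ 2 + ε ^ 2) ^ 3)⁻¹ * ‖f x‖ ^ 2)
      ≤ ((n : ℝ) * (Real.sqrt (‖x‖ ^ 2 + ε ^ 2))⁻¹
          - ‖x‖ ^ 2 * (Real.sqrt (‖x‖ ^ 2 + ε ^ 2) ^ 3)⁻¹) * ‖f x‖ ^ 2 := by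
    intro x
    have hsq : Real.sqrt (‖x‖ ^ 2 + ε ^ 2) ^ 2 = ‖x‖ ^ 2 + ε ^ 2 := Real.sq_sqrt (hq x).le
    have hsne := (hs0 x).ne'
    have h2 : (n : ℝ) * (Real.sqrt (‖x‖ ^ 2 + ε ^ 2))⁻¹
        - ‖x‖ ^ 2 * (Real.sqrt (‖x‖ ^ 2 + ε ^ 2) ^ 3)⁻¹
        - ((n : ℝ) - 1) * (‖x‖ ^ 2 * (Real.sqrt (‖x‖ ^ 2 + ε ^ 2) ^ 3)⁻¹)
        = (n : ℝ) * (Real.sqrt (‖x‖ ^ 2 + ε ^ 2) ^ 2 - ‖x‖ ^ 2)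
          * (Real.sqrt (‖x‖ ^ 2 + ε ^ 2) ^ 3)⁻¹ := by
      field_simp
      ring
    have h3 : (0:ℝ) ≤ (n : ℝ) * (Real.sqrt (‖x‖ ^ 2 + ε ^ 2) ^ 2 - ‖x‖ ^ 2)
        * (Real.sqrt (‖x‖ ^ 2 + ε ^ 2) ^ 3)⁻¹ := by
      rw [hsq, show ‖x‖ ^ 2 + ε ^ 2 - ‖x‖ ^ 2 = ε ^ 2 from by ring]
      positivity
    have h1 : ((n : ℝ) - 1) * (‖x‖ ^ 2 * (Real.sqrt (‖x‖ ^ 2 + ε ^ 2) ^ 3)⁻¹)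
        ≤ (n : ℝ) * (Real.sqrt (‖x‖ ^ 2 + ε ^ 2))⁻¹
          - ‖x‖ ^ 2 * (Real.sqrt (‖x‖ ^ 2 + ε ^ 2) ^ 3)⁻¹ := by linarith
    calc ((n : ℝ) - 1) * (‖x‖ ^ 2 * (Real.sqrt (‖x‖ ^ 2 + ε ^ 2) ^ 3)⁻¹ * ‖f x‖ ^ 2)
        = (((n : ℝ) - 1) * (‖x‖ ^ 2 * (Real.sqrt (‖x‖ ^ 2 + ε ^ 2) ^ 3)⁻¹)) * ‖f x‖ ^ 2 := by
          ring
      _ ≤ _ := mul_le_mul_of_nonneg_right h1 (by positivity)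
  have pw2 : ∀ x : EuclideanSpace ℝ (Fin n),
      |(Real.sqrt (‖x‖ ^ 2 + ε ^ 2))⁻¹ * fderiv ℝ (fun x => ‖f x‖ ^ 2) x x|
      ≤ 2 * ‖f x‖ * Real.sqrt (∑ j : Fin n, ‖fderiv ℝ f x (EuclideanSpace.single j 1)‖ ^ 2) := by
    intro x
    have hinv0 : (0:ℝ) ≤ (Real.sqrt (‖x‖ ^ 2 + ε ^ 2))⁻¹ := by positivity
    rw [abs_mul, abs_of_nonneg hinv0, hDφ_apply x x]
    have hinner : |(inner ℝ (f x) (fderiv ℝ f x x) : ℝ)|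
        ≤ ‖f x‖ * (‖x‖ * Real.sqrt (∑ j : Fin n,
            ‖fderiv ℝ f x (EuclideanSpace.single j 1)‖ ^ 2)) := by
      refine (abs_real_inner_le_norm _ _).trans ?_
      have := clm_cs_bound (fderiv ℝ f x) x
      exact mul_le_mul_of_nonneg_left this (norm_nonneg _)
    have h4 : (Real.sqrt (‖x‖ ^ 2 + ε ^ 2))⁻¹ * |2 * (inner ℝ (f x) (fderiv ℝ f x x) : ℝ)|
        ≤ (Real.sqrt (‖x‖ ^ 2 + ε ^ 2))⁻¹ * (2 * (‖f x‖ * (‖x‖ * Real.sqrt (∑ j : Fin n,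
            ‖fderiv ℝ f x (EuclideanSpace.single j 1)‖ ^ 2)))) := by
      apply mul_le_mul_of_nonneg_left _ hinv0
      rw [abs_mul, abs_two]
      exact mul_le_mul_of_nonneg_left hinner (by norm_num)
    refine h4.trans ?_
    have h5 : (Real.sqrt (‖x‖ ^ 2 + ε ^ 2))⁻¹ * ‖x‖ ≤ 1 := by
      rw [← div_eq_inv_mul]
      exact (div_le_one (hs0 x)).2 (hsle x)
    calc (Real.sqrt (‖x‖ ^ 2 + ε ^ 2))⁻¹ * (2 * (‖f x‖ * (‖x‖ * Real.sqrt (∑ j : Fin n,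
          ‖fderiv ℝ f x (EuclideanSpace.single j 1)‖ ^ 2))))
        = (2 * ‖f x‖ * Real.sqrt (∑ j : Fin n,
            ‖fderiv ℝ f x (EuclideanSpace.single j 1)‖ ^ 2))
          * ((Real.sqrt (‖x‖ ^ 2 + ε ^ 2))⁻¹ * ‖x‖) := by ring
      _ ≤ (2 * ‖f x‖ * Real.sqrt (∑ j : Fin n,
            ‖fderiv ℝ f x (EuclideanSpace.single j 1)‖ ^ 2)) * 1 :=
          mul_le_mul_of_nonneg_left h5 (by positivity)
      _ = _ := mul_one _
  -- final chain
  calc ((n : ℝ) - 1) * ∫ x : EuclideanSpace ℝ (Fin n),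
        ‖x‖ ^ 2 * (Real.sqrt (‖x‖ ^ 2 + ε ^ 2) ^ 3)⁻¹ * ‖f x‖ ^ 2
      = ∫ x : EuclideanSpace ℝ (Fin n),
          ((n : ℝ) - 1) * (‖x‖ ^ 2 * (Real.sqrt (‖x‖ ^ 2 + ε ^ 2) ^ 3)⁻¹ * ‖f x‖ ^ 2) :=
        (integral_const_mul _ _).symm
    _ ≤ ∫ x : EuclideanSpace ℝ (Fin n),
          ((n : ℝ) * (Real.sqrt (‖x‖ ^ 2 + ε ^ 2))⁻¹
            - ‖x‖ ^ 2 * (Real.sqrt (‖x‖ ^ 2 + ε ^ 2) ^ 3)⁻¹) * ‖f x‖ ^ 2 :=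
        integral_mono (intI1.const_mul _) intI2 pw1
    _ = - ∫ x : EuclideanSpace ℝ (Fin n),
          (Real.sqrt (‖x‖ ^ 2 + ε ^ 2))⁻¹ * fderiv ℝ (fun x => ‖f x‖ ^ 2) x x := by
        linarith [sumid]
    _ ≤ |∫ x : EuclideanSpace ℝ (Fin n),
          (Real.sqrt (‖x‖ ^ 2 + ε ^ 2))⁻¹ * fderiv ℝ (fun x => ‖f x‖ ^ 2) x x| :=
        neg_le_abs _
    _ ≤ ∫ x : EuclideanSpace ℝ (Fin n),
          |(Real.sqrt (‖x‖ ^ 2 + ε ^ 2))⁻¹ * fderiv ℝ (fun x => ‖f x‖ ^ 2) x x| := by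
        have h := norm_integral_le_integral_norm (μ := volume)
          (fun x : EuclideanSpace ℝ (Fin n) =>
            (Real.sqrt (‖x‖ ^ 2 + ε ^ 2))⁻¹ * fderiv ℝ (fun x => ‖f x‖ ^ 2) x x)
        simp only [Real.norm_eq_abs] at h
        exact h
    _ ≤ ∫ x : EuclideanSpace ℝ (Fin n),
          2 * ‖f x‖ * Real.sqrt (∑ j : Fin n,
            ‖fderiv ℝ f x (EuclideanSpace.single j 1)‖ ^ 2) :=
        integral_mono intu.abs intI3 pw2

/-- **Weighted Hardy inequality**: for `n ≥ 3` and `f ∈ C₀^∞(ℝⁿ)`,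
`((n-1)²/4) ∫ |x|⁻¹ |f|² dx ≤ ∫ |x| |∇f|² dx`. -/
theorem weighted_hardy_inequality (n : ℕ) (hn : 3 ≤ n)
    (f : EuclideanSpace ℝ (Fin n) → ℂ)
    (hf : ContDiff ℝ (⊤ : ℕ∞) f) (hsupp : HasCompactSupport f) :
    ((n : ℝ) - 1) ^ 2 / 4 * ∫ x : EuclideanSpace ℝ (Fin n), ‖x‖⁻¹ * ‖f x‖ ^ 2 ≤
      ∫ x : EuclideanSpace ℝ (Fin n),
        ‖x‖ * ∑ j : Fin n, ‖fderiv ℝ f x (EuclideanSpace.single j 1)‖ ^ 2 := by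
  have hB0 : (0:ℝ) ≤ ∫ x : EuclideanSpace ℝ (Fin n),
      ‖x‖ * ∑ j : Fin n, ‖fderiv ℝ f x (EuclideanSpace.single j 1)‖ ^ 2 :=
    integral_nonneg fun x => by positivity
  by_cases hA : Integrable
    (fun x : EuclideanSpace ℝ (Fin n) => ‖x‖⁻¹ * ‖f x‖ ^ 2) volume
  swap
  · rw [integral_undef hA, mul_zero]
    exact hB0
  have hfc : Continuous f := hf.continuous
  have hG2cont : Continuous fun x : EuclideanSpace ℝ (Fin n) =>
      ∑ j : Fin n, ‖fderiv ℝ f x (EuclideanSpace.single j 1)‖ ^ 2 :=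
    continuous_finset_sum _ fun j _ =>
      (((hf.continuous_fderiv (by simp)).clm_apply continuous_const).norm.pow 2)
  haveI : Nonempty (Fin n) := ⟨⟨0, by omega⟩⟩
  haveI : Nontrivial (EuclideanSpace ℝ (Fin n)) := inferInstance
  have h0ae : ∀ᵐ x : EuclideanSpace ℝ (Fin n) ∂volume, x ≠ 0 := by
    rw [ae_iff]
    have hset : {x : EuclideanSpace ℝ (Fin n) | ¬ x ≠ 0} = {0} := by ext y; simp
    rw [hset]
    exact measure_singleton 0
  -- step 1: limit ε → 0 of eps_step
  have hM : ((n : ℝ) - 1) * (∫ x : EuclideanSpace ℝ (Fin n), ‖x‖⁻¹ * ‖f x‖ ^ 2)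
      ≤ ∫ x : EuclideanSpace ℝ (Fin n), 2 * ‖f x‖ *
          Real.sqrt (∑ j : Fin n, ‖fderiv ℝ f x (EuclideanSpace.single j 1)‖ ^ 2) := by
    have hεk : ∀ k : ℕ, (0:ℝ) < 1 / (k + 1) := fun k => by positivity
    have hstep : ∀ k : ℕ, ((n : ℝ) - 1) * ∫ x : EuclideanSpace ℝ (Fin n),
        ‖x‖ ^ 2 * (Real.sqrt (‖x‖ ^ 2 + (1 / ((k:ℝ) + 1)) ^ 2) ^ 3)⁻¹ * ‖f x‖ ^ 2
        ≤ ∫ x : EuclideanSpace ℝ (Fin n), 2 * ‖f x‖ *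
          Real.sqrt (∑ j : Fin n, ‖fderiv ℝ f x (EuclideanSpace.single j 1)‖ ^ 2) :=
      fun k => eps_step f hf hsupp (hεk k)
    have hconv : Filter.Tendsto (fun k : ℕ => ∫ x : EuclideanSpace ℝ (Fin n),
        ‖x‖ ^ 2 * (Real.sqrt (‖x‖ ^ 2 + (1 / ((k:ℝ) + 1)) ^ 2) ^ 3)⁻¹ * ‖f x‖ ^ 2)
        Filter.atTop (nhds (∫ x : EuclideanSpace ℝ (Fin n), ‖x‖⁻¹ * ‖f x‖ ^ 2)) := by
      apply tendsto_integral_of_dominated_convergence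
        (fun x : EuclideanSpace ℝ (Fin n) => ‖x‖⁻¹ * ‖f x‖ ^ 2) _ hA
      · -- bound
        intro k
        refine Filter.Eventually.of_forall fun x => ?_
        rw [Real.norm_eq_abs, abs_of_nonneg (by positivity)]
        rcases eq_or_ne (‖x‖) 0 with h0 | h0
        · simp [h0]
        · have hx : 0 < ‖x‖ := lt_of_le_of_ne (norm_nonneg x) (Ne.symm h0)
          have hs : ‖x‖ ≤ Real.sqrt (‖x‖ ^ 2 + (1 / ((k:ℝ) + 1)) ^ 2) := by
            have h := Real.sqrt_le_sqrt
              (show ‖x‖ ^ 2 ≤ ‖x‖ ^ 2 + (1 / ((k:ℝ) + 1)) ^ 2 from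
                le_add_of_nonneg_right (by positivity))
            rwa [Real.sqrt_sq (norm_nonneg x)] at h
          have h3 : ‖x‖ ^ 3 ≤ Real.sqrt (‖x‖ ^ 2 + (1 / ((k:ℝ) + 1)) ^ 2) ^ 3 :=
            pow_le_pow_left₀ hx.le hs 3
          have hinv : (Real.sqrt (‖x‖ ^ 2 + (1 / ((k:ℝ) + 1)) ^ 2) ^ 3)⁻¹ ≤ (‖x‖ ^ 3)⁻¹ :=
            inv_anti₀ (by positivity) h3
          calc ‖x‖ ^ 2 * (Real.sqrt (‖x‖ ^ 2 + (1 / ((k:ℝ) + 1)) ^ 2) ^ 3)⁻¹ * ‖f x‖ ^ 2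
              ≤ ‖x‖ ^ 2 * (‖x‖ ^ 3)⁻¹ * ‖f x‖ ^ 2 :=
              mul_le_mul_of_nonneg_right
                (mul_le_mul_of_nonneg_left hinv (by positivity)) (by positivity)
            _ = ‖x‖⁻¹ * ‖f x‖ ^ 2 := by
              rw [show ‖x‖ ^ 2 * (‖x‖ ^ 3)⁻¹ = ‖x‖⁻¹ by
                field_simp]
      · -- a.e. convergence
        filter_upwards [h0ae] with x hx
        have hnx : 0 < ‖x‖ := norm_pos_iff.2 hx
        have h2 : Real.sqrt (‖x‖ ^ 2 + (0:ℝ) ^ 2) ^ 3 ≠ 0 := by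
          have : Real.sqrt (‖x‖ ^ 2 + (0:ℝ) ^ 2) = ‖x‖ := by
            rw [zero_pow (by norm_num), add_zero, Real.sqrt_sq (norm_nonneg x)]
          rw [this]
          positivity
        have hcont : ContinuousAt
            (fun e : ℝ => ‖x‖ ^ 2 * (Real.sqrt (‖x‖ ^ 2 + e ^ 2) ^ 3)⁻¹ * ‖f x‖ ^ 2) 0 := by
          have h1 : Continuous (fun e : ℝ => Real.sqrt (‖x‖ ^ 2 + e ^ 2)) :=
            (continuous_const.add (continuous_pow 2)).sqrt
          exact ((continuousAt_const.mul
            (((h1.pow 3).continuousAt).inv₀ h2)).mul continuousAt_const)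
        have hlim := hcont.tendsto.comp tendsto_one_div_add_atTop_nhds_zero_nat
        have hval : ‖x‖ ^ 2 * (Real.sqrt (‖x‖ ^ 2 + (0:ℝ) ^ 2) ^ 3)⁻¹ * ‖f x‖ ^ 2
            = ‖x‖⁻¹ * ‖f x‖ ^ 2 := by
          rw [zero_pow (by norm_num), add_zero, Real.sqrt_sq (norm_nonneg x),
            show ‖x‖ ^ 2 * (‖x‖ ^ 3)⁻¹ = ‖x‖⁻¹ by
              field_simp]
        rw [← hval]
        exact hlim
      · -- measurability
        intro k
        exact (((continuous_norm.pow 2).mul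
          ((((continuous_norm.pow 2).add continuous_const).sqrt.pow 3).inv₀
            (fun x => pow_ne_zero 3 (Real.sqrt_pos.2 (add_pos_of_nonneg_of_pos (sq_nonneg _) (pow_pos (hεk k) 2))).ne'))).mul (hfc.norm.pow 2)).aestronglyMeasurable
    exact le_of_tendsto (hconv.const_mul ((n:ℝ) - 1)) (Filter.Eventually.of_forall hstep)
  -- step 2: Cauchy--Schwarz (Hölder with p = q = 2)
  have hMle : (∫ x : EuclideanSpace ℝ (Fin n), 2 * ‖f x‖ *
        Real.sqrt (∑ j : Fin n, ‖fderiv ℝ f x (EuclideanSpace.single j 1)‖ ^ 2))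
      ≤ 2 * ((∫ x : EuclideanSpace ℝ (Fin n), ‖x‖⁻¹ * ‖f x‖ ^ 2) ^ ((1:ℝ)/2) *
          (∫ x : EuclideanSpace ℝ (Fin n),
            ‖x‖ * ∑ j : Fin n, ‖fderiv ℝ f x (EuclideanSpace.single j 1)‖ ^ 2) ^ ((1:ℝ)/2)) := by
    have hpq : Real.HolderConjugate 2 2 := by constructor <;> norm_num
    have humeas : AEStronglyMeasurable
        (fun x : EuclideanSpace ℝ (Fin n) => Real.sqrt (‖x‖⁻¹) * ‖f x‖) volume :=
      ((Real.continuous_sqrt.measurable.comp measurable_norm.inv).mul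
        hfc.norm.measurable).aestronglyMeasurable
    have hwcont : Continuous (fun x : EuclideanSpace ℝ (Fin n) =>
        Real.sqrt ‖x‖ * Real.sqrt (∑ j : Fin n,
          ‖fderiv ℝ f x (EuclideanSpace.single j 1)‖ ^ 2)) :=
      continuous_norm.sqrt.mul hG2cont.sqrt
    have hu2 : (fun x : EuclideanSpace ℝ (Fin n) => (Real.sqrt (‖x‖⁻¹) * ‖f x‖) ^ 2)
        = fun x => ‖x‖⁻¹ * ‖f x‖ ^ 2 := funext fun x => by
      rw [mul_pow, Real.sq_sqrt (inv_nonneg.2 (norm_nonneg x))]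
    have hw2 : (fun x : EuclideanSpace ℝ (Fin n) =>
        (Real.sqrt ‖x‖ * Real.sqrt (∑ j : Fin n,
          ‖fderiv ℝ f x (EuclideanSpace.single j 1)‖ ^ 2)) ^ 2)
        = fun x => ‖x‖ * ∑ j : Fin n, ‖fderiv ℝ f x (EuclideanSpace.single j 1)‖ ^ 2 :=
      funext fun x => by
        rw [mul_pow, Real.sq_sqrt (norm_nonneg x),
          Real.sq_sqrt (Finset.sum_nonneg fun j _ => by positivity)]
    have hG2c : HasCompactSupport (fun x : EuclideanSpace ℝ (Fin n) =>
        ∑ j : Fin n, ‖fderiv ℝ f x (EuclideanSpace.single j 1)‖ ^ 2) := by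
      have := (HasCompactSupport.fderiv ℝ hsupp).comp_left
        (g := fun L : EuclideanSpace ℝ (Fin n) →L[ℝ] ℂ =>
          ∑ j : Fin n, ‖L (EuclideanSpace.single j 1)‖ ^ 2) (by simp)
      simpa [Function.comp_def] using this
    have hwint : Integrable (fun x : EuclideanSpace ℝ (Fin n) =>
        ‖x‖ * ∑ j : Fin n, ‖fderiv ℝ f x (EuclideanSpace.single j 1)‖ ^ 2) volume :=
      (continuous_norm.mul hG2cont).integrable_of_hasCompactSupport hG2c.mul_left
    have hof : ENNReal.ofReal (2:ℝ) = 2 := ENNReal.ofReal_ofNat 2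
    have humem : MemLp (fun x : EuclideanSpace ℝ (Fin n) => Real.sqrt (‖x‖⁻¹) * ‖f x‖)
        (ENNReal.ofReal (2:ℝ)) volume := by
      rw [hof]
      exact (memLp_two_iff_integrable_sq humeas).2 (by rw [hu2]; exact hA)
    have hwmem : MemLp (fun x : EuclideanSpace ℝ (Fin n) =>
        Real.sqrt ‖x‖ * Real.sqrt (∑ j : Fin n,
          ‖fderiv ℝ f x (EuclideanSpace.single j 1)‖ ^ 2)) (ENNReal.ofReal (2:ℝ)) volume := by
      rw [hof]
      exact (memLp_two_iff_integrable_sq hwcont.aestronglyMeasurable).2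
        (by rw [hw2]; exact hwint)
    have hcs := integral_mul_le_Lp_mul_Lq_of_nonneg hpq
      (Filter.Eventually.of_forall fun x => by positivity)
      (Filter.Eventually.of_forall fun x => by positivity) humem hwmem
    have hrpow2 : ∀ a : ℝ, a ^ (2:ℝ) = a ^ 2 := fun a => by
      rw [show (2:ℝ) = ((2:ℕ):ℝ) by norm_num, Real.rpow_natCast]
    simp only [hrpow2, hu2, hw2] at hcs
    -- hcs : ∫ u w ≤ A^(1/2) * B^(1/2)
    have hae : ∫ x : EuclideanSpace ℝ (Fin n), ‖f x‖ * Real.sqrt (∑ j : Fin n,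
        ‖fderiv ℝ f x (EuclideanSpace.single j 1)‖ ^ 2)
        = ∫ x : EuclideanSpace ℝ (Fin n), (Real.sqrt (‖x‖⁻¹) * ‖f x‖) *
          (Real.sqrt ‖x‖ * Real.sqrt (∑ j : Fin n,
            ‖fderiv ℝ f x (EuclideanSpace.single j 1)‖ ^ 2)) := by
      refine integral_congr_ae ?_
      filter_upwards [h0ae] with x hx
      have hnx : 0 < ‖x‖ := norm_pos_iff.2 hx
      have hs : Real.sqrt (‖x‖⁻¹) * Real.sqrt ‖x‖ = 1 := by
        rw [Real.sqrt_inv]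
        exact inv_mul_cancel₀ (by positivity)
      calc ‖f x‖ * Real.sqrt (∑ j : Fin n,
            ‖fderiv ℝ f x (EuclideanSpace.single j 1)‖ ^ 2)
          = (Real.sqrt (‖x‖⁻¹) * Real.sqrt ‖x‖) * (‖f x‖ * Real.sqrt (∑ j : Fin n,
            ‖fderiv ℝ f x (EuclideanSpace.single j 1)‖ ^ 2)) := by rw [hs, one_mul]
        _ = (Real.sqrt (‖x‖⁻¹) * ‖f x‖) * (Real.sqrt ‖x‖ * Real.sqrt (∑ j : Fin n,
            ‖fderiv ℝ f x (EuclideanSpace.single j 1)‖ ^ 2)) := by ring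
    calc (∫ x : EuclideanSpace ℝ (Fin n), 2 * ‖f x‖ *
          Real.sqrt (∑ j : Fin n, ‖fderiv ℝ f x (EuclideanSpace.single j 1)‖ ^ 2))
        = ∫ x : EuclideanSpace ℝ (Fin n), 2 * (‖f x‖ *
          Real.sqrt (∑ j : Fin n, ‖fderiv ℝ f x (EuclideanSpace.single j 1)‖ ^ 2)) := by
          refine integral_congr_ae (Filter.Eventually.of_forall fun x => ?_)
          ring
      _ = 2 * ∫ x : EuclideanSpace ℝ (Fin n), ‖f x‖ *
          Real.sqrt (∑ j : Fin n, ‖fderiv ℝ f x (EuclideanSpace.single j 1)‖ ^ 2) :=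
          integral_const_mul 2 _
      _ ≤ 2 * ((∫ x : EuclideanSpace ℝ (Fin n), ‖x‖⁻¹ * ‖f x‖ ^ 2) ^ ((1:ℝ)/2) *
          (∫ x : EuclideanSpace ℝ (Fin n),
            ‖x‖ * ∑ j : Fin n, ‖fderiv ℝ f x (EuclideanSpace.single j 1)‖ ^ 2) ^ ((1:ℝ)/2)) := by
          rw [hae]
          exact mul_le_mul_of_nonneg_left hcs (by norm_num)
  -- step 3: conclude by algebra
  set A := ∫ x : EuclideanSpace ℝ (Fin n), ‖x‖⁻¹ * ‖f x‖ ^ 2 with hAdef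
  set B := ∫ x : EuclideanSpace ℝ (Fin n),
      ‖x‖ * ∑ j : Fin n, ‖fderiv ℝ f x (EuclideanSpace.single j 1)‖ ^ 2 with hBdef
  have hA0 : 0 ≤ A := integral_nonneg fun x => by positivity
  rcases eq_or_lt_of_le hA0 with h | hApos
  · rw [← h, mul_zero]
    exact hB0
  · have h2 : ((n:ℝ) - 1) * A ≤ 2 * (A ^ ((1:ℝ)/2) * B ^ ((1:ℝ)/2)) := hM.trans hMle
    have ha : (A ^ ((1:ℝ)/2)) ^ 2 = A := by
      rw [← Real.rpow_natCast (A ^ ((1:ℝ)/2)) 2, ← Real.rpow_mul hA0]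
      norm_num
    have hb : (B ^ ((1:ℝ)/2)) ^ 2 = B := by
      rw [← Real.rpow_natCast (B ^ ((1:ℝ)/2)) 2, ← Real.rpow_mul hB0]
      norm_num
    have haa : 0 < A ^ ((1:ℝ)/2) := Real.rpow_pos_of_pos hApos _
    have hbb : 0 ≤ B ^ ((1:ℝ)/2) := Real.rpow_nonneg hB0 _
    have hcn : (2:ℝ) ≤ (n:ℝ) - 1 := by
      have h3 : (3:ℝ) ≤ (n:ℝ) := by exact_mod_cast hn
      linarith
    have h3 : ((n:ℝ) - 1) * A ^ ((1:ℝ)/2) ≤ 2 * B ^ ((1:ℝ)/2) := by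
      nlinarith [h2, ha, hb, haa, hbb]
    have h4 : (((n:ℝ) - 1) * A ^ ((1:ℝ)/2)) ^ 2 ≤ (2 * B ^ ((1:ℝ)/2)) ^ 2 := by
      have hnn : 0 ≤ ((n:ℝ) - 1) * A ^ ((1:ℝ)/2) := by positivity
      exact pow_le_pow_left₀ hnn h3 2
    rw [mul_pow, mul_pow, ha, hb] at h4
    nlinarith [h4]
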